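/- arXiv:1104.0607 — 6 statements merged into one kernel-verified Lean document; each statement's English description precedes it below -/
import Mathlib

section
/- Elimination of classical disjunction (Lemma 2a): for every MDL formula φ there exist a positive integer m with m ≤ 2^{|φ|} and ⊘-free MDL formulas ψ₁,…,ψ_m such that for every frame W and every team T, W,T ⊨ φ if and only if W,T ⊨ ψ_i for some i ∈ {1,…,m}. Here |φ| denotes the length (number of symbols) of φ. -/
/-- Formulas of modal dependence logic over atomic propositions `AP`.
Negation occurs only in front of atoms (`natom`) and dependence atoms (`ndep`).
`dep ps q` is the dependence atom dep(p₁,…,p_{n-1};p_n) with `ps` the list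
p₁,…,p_{n-1} and `q = p_n`.  `or` is dependence disjunction ∨ and
`cor` is classical disjunction ⊘. -/
inductive MDL (AP : Type) : Type
  | top : MDL AP
  | bot : MDL AP
  | atom : AP → MDL AP
  | natom : AP → MDL AP
  | dep : List AP → AP → MDL AP
  | ndep : List AP → AP → MDL AP
  | and : MDL AP → MDL AP → MDL AP
  | or : MDL AP → MDL AP → MDL AP
  | cor : MDL AP → MDL AP → MDL AP
  | box : MDL AP → MDL AP
  | dia : MDL AP → MDL AP

/-- A Kripke frame `W = (S, R, π)`. -/
structure Frame (AP : Type) where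
  S : Type
  R : S → S → Prop
  pi : S → Set AP

/-- Team semantics of MDL: `sat W φ T` means `W, T ⊨ φ`. -/
def sat {AP : Type} (W : Frame AP) : MDL AP → Set W.S → Prop
  | .top, _ => True
  | .bot, T => T = ∅
  | .atom p, T => ∀ s ∈ T, p ∈ W.pi s
  | .natom p, T => ∀ s ∈ T, p ∉ W.pi s
  | .dep ps q, T => ∀ s₁ ∈ T, ∀ s₂ ∈ T,
      (∀ p ∈ ps, (p ∈ W.pi s₁ ↔ p ∈ W.pi s₂)) → (q ∈ W.pi s₁ ↔ q ∈ W.pi s₂)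
  | .ndep _ _, T => T = ∅
  | .and φ ψ, T => sat W φ T ∧ sat W ψ T
  | .or φ ψ, T => ∃ T₁ T₂, T = T₁ ∪ T₂ ∧ sat W φ T₁ ∧ sat W ψ T₂
  | .cor φ ψ, T => sat W φ T ∨ sat W ψ T
  | .box φ, T => sat W φ {s' | ∃ s ∈ T, W.R s s'}
  | .dia φ, T => ∃ T' : Set W.S, sat W φ T' ∧ ∀ s ∈ T, ∃ s' ∈ T', W.R s s'

/-- A formula is satisfiable iff some frame and nonempty team satisfy it. -/
def satisfiable {AP : Type} (φ : MDL AP) : Prop :=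
  ∃ (W : Frame AP) (T : Set W.S), T.Nonempty ∧ sat W φ T

/-- A formula is ⊘-free if it contains no classical disjunction. -/
def corFree {AP : Type} : MDL AP → Prop
  | .cor _ _ => False
  | .and φ ψ => corFree φ ∧ corFree ψ
  | .or φ ψ => corFree φ ∧ corFree ψ
  | .box φ => corFree φ
  | .dia φ => corFree φ
  | _ => True

/-- The length (number of symbols) of a formula. -/
def size {AP : Type} : MDL AP → ℕ
  | .top => 1
  | .bot => 1
  | .atom _ => 1
  | .natom _ => 2
  | .dep ps _ => ps.length + 2
  | .ndep ps _ => ps.length + 3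
  | .and φ ψ => size φ + size ψ + 1
  | .or φ ψ => size φ + size ψ + 1
  | .cor φ ψ => size φ + size ψ + 1
  | .box φ => size φ + 1
  | .dia φ => size φ + 1

/-! Every connective other than `⊘` distributes over `⊘` (for `∨` and `◇` because the subteams
they quantify over are chosen existentially), so pushing `⊘` to the top turns `φ` into a classical
disjunction of `⊘`-free formulas. The number of disjuncts multiplies at `∧` and `∨` and adds at
`⊘`, hence is at most `2 ^ |φ|`. -/

namespace List

variable {α β γ : Type*}

def productWith (f : α → β → γ) (l₁ : List α) (l₂ : List β) : List γ :=
  (l₁ ×ˢ l₂).map fun p => f p.1 p.2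

theorem mem_productWith {f : α → β → γ} {l₁ : List α} {l₂ : List β} {c : γ} :
    c ∈ productWith f l₁ l₂ ↔ ∃ a ∈ l₁, ∃ b ∈ l₂, f a b = c := by
  simp [productWith, mem_product, and_assoc]

theorem exists_mem_productWith_iff {f : α → β → γ} {l₁ : List α} {l₂ : List β} {P : γ → Prop} :
    (∃ c ∈ productWith f l₁ l₂, P c) ↔ ∃ a ∈ l₁, ∃ b ∈ l₂, P (f a b) := by
  simp [mem_productWith]

theorem length_productWith (f : α → β → γ) (l₁ : List α) (l₂ : List β) :
    (productWith f l₁ l₂).length = l₁.length * l₂.length := by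
  simp [productWith, length_product]

theorem productWith_ne_nil {f : α → β → γ} {l₁ : List α} {l₂ : List β} (h₁ : l₁ ≠ [])
    (h₂ : l₂ ≠ []) : productWith f l₁ l₂ ≠ [] := by
  rw [← length_pos_iff, length_productWith]
  exact Nat.mul_pos (length_pos_iff.2 h₁) (length_pos_iff.2 h₂)

theorem exists_mem_map_iff {f : α → β} {l : List α} {P : β → Prop} :
    (∃ b ∈ l.map f, P b) ↔ ∃ a ∈ l, P (f a) := by
  simp

end List

namespace MDL

variable {AP : Type}

def disjuncts : MDL AP → List (MDL AP)
  | .and φ ψ => List.productWith .and (disjuncts φ) (disjuncts ψ)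
  | .or φ ψ => List.productWith .or (disjuncts φ) (disjuncts ψ)
  | .cor φ ψ => disjuncts φ ++ disjuncts ψ
  | .box φ => (disjuncts φ).map .box
  | .dia φ => (disjuncts φ).map .dia
  | φ => [φ]

theorem disjuncts_ne_nil (φ : MDL AP) : disjuncts φ ≠ [] := by
  induction φ <;> simp_all [disjuncts, List.productWith_ne_nil]

theorem length_disjuncts_le (φ : MDL AP) : (disjuncts φ).length ≤ 2 ^ size φ := by
  induction φ with
  | and φ ψ ihφ ihψ | or φ ψ ihφ ihψ =>
    rw [disjuncts, List.length_productWith, size, pow_succ, pow_add]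
    have := Nat.mul_le_mul ihφ ihψ
    omega
  | cor φ ψ ihφ ihψ =>
    rw [disjuncts, List.length_append, size, pow_succ, mul_two]
    have := Nat.pow_le_pow_right two_pos (Nat.le_add_right (size φ) (size ψ))
    have := Nat.pow_le_pow_right two_pos (Nat.le_add_left (size ψ) (size φ))
    omega
  | box φ ih | dia φ ih =>
    rw [disjuncts, List.length_map, size, pow_succ]
    omega
  | _ => simp [disjuncts, size, Nat.one_le_two_pow]

theorem corFree_of_mem_disjuncts {φ χ : MDL AP} (h : χ ∈ disjuncts φ) : corFree χ := by
  induction φ generalizing χ with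
  | and φ ψ ihφ ihψ | or φ ψ ihφ ihψ =>
    obtain ⟨a, ha, b, hb, rfl⟩ := List.mem_productWith.1 h
    exact ⟨ihφ ha, ihψ hb⟩
  | cor φ ψ ihφ ihψ => exact (List.mem_append.1 h).elim ihφ ihψ
  | box φ ih | dia φ ih =>
    obtain ⟨a, ha, rfl⟩ := List.mem_map.1 h
    exact (ih ha : corFree a)
  | _ => rw [List.mem_singleton.1 h]; trivial

theorem sat_iff_exists_mem_disjuncts (W : Frame AP) (φ : MDL AP) (T : Set W.S) :
    sat W φ T ↔ ∃ χ ∈ disjuncts φ, sat W χ T := by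
  induction φ generalizing T with
  | and φ ψ ihφ ihψ =>
    simp only [disjuncts, List.exists_mem_productWith_iff, sat, ihφ, ihψ]
    constructor
    · rintro ⟨⟨a, ha, hφ⟩, b, hb, hψ⟩
      exact ⟨a, ha, b, hb, hφ, hψ⟩
    · rintro ⟨a, ha, b, hb, hφ, hψ⟩
      exact ⟨⟨a, ha, hφ⟩, b, hb, hψ⟩
  | or φ ψ ihφ ihψ =>
    simp only [disjuncts, List.exists_mem_productWith_iff, sat, ihφ, ihψ]
    constructor
    · rintro ⟨T₁, T₂, rfl, ⟨a, ha, hφ⟩, b, hb, hψ⟩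
      exact ⟨a, ha, b, hb, T₁, T₂, rfl, hφ, hψ⟩
    · rintro ⟨a, ha, b, hb, T₁, T₂, rfl, hφ, hψ⟩
      exact ⟨T₁, T₂, rfl, ⟨a, ha, hφ⟩, b, hb, hψ⟩
  | cor φ ψ ihφ ihψ =>
    simp only [disjuncts, sat, ihφ, ihψ, List.mem_append, or_and_right, exists_or]
  | box φ ih => simp only [disjuncts, List.exists_mem_map_iff, sat, ih]
  | dia φ ih =>
    simp only [disjuncts, List.exists_mem_map_iff, sat, ih]
    constructor
    · rintro ⟨T', ⟨a, ha, hφ⟩, hR⟩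
      exact ⟨a, ha, T', hφ, hR⟩
    · rintro ⟨a, ha, T', hφ, hR⟩
      exact ⟨T', ⟨a, ha, hφ⟩, hR⟩
  | _ => simp [disjuncts]

end MDL

/-- elimination of classical disjunction (Lemma 2a). -/
theorem cor_elimination {AP : Type} (φ : MDL AP) :
    ∃ (m : ℕ), 0 < m ∧ m ≤ 2 ^ size φ ∧
      ∃ ψ : Fin m → MDL AP, (∀ i, corFree (ψ i)) ∧
        ∀ (W : Frame AP) (T : Set W.S), sat W φ T ↔ ∃ i, sat W (ψ i) T := by
  refine ⟨_, List.length_pos_iff.2 φ.disjuncts_ne_nil, φ.length_disjuncts_le, φ.disjuncts.get,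
    fun i => MDL.corFree_of_mem_disjuncts (List.get_mem _ i), fun W T => ?_⟩
  rw [MDL.sat_iff_exists_mem_disjuncts, List.exists_mem_iff_get]
end

section
/- Full-labeling lemma: let φ be a negation-free MDL formula and W = (S,R,π) a frame with W,T ⊨ φ for a team T. Let W' = (S,R,π') be the frame with the same worlds and accessibility relation but with π'(s) = AP for every world s (every atomic proposition true everywhere). Then W',T ⊨ φ. -/
/-- A formula is negation-free if it contains no ¬p and no ¬dep(…;…). -/
def negFree {AP : Type} : MDL AP → Prop
  | .natom _ => False
  | .ndep _ _ => False
  | .and φ ψ => negFree φ ∧ negFree ψ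
  | .or φ ψ => negFree φ ∧ negFree ψ
  | .cor φ ψ => negFree φ ∧ negFree ψ
  | .box φ => negFree φ
  | .dia φ => negFree φ
  | _ => True

def Frame.fullLabeling {AP : Type} (W : Frame AP) : Frame AP :=
  { W with pi := fun _ => Set.univ }

/-- Under the full labeling every proposition atom holds, and every dependence atom holds because
all worlds carry the same label; the connectives and modalities only pass teams along. -/
theorem sat_fullLabeling {AP : Type} {W : Frame AP} {φ : MDL AP} (hφ : negFree φ) {T : Set W.S}
    (h : sat W φ T) : sat W.fullLabeling φ T := by
  induction φ generalizing T with
  | top | bot => exact h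
  | atom _ => exact fun _ _ => Set.mem_univ _
  | dep _ _ => exact fun _ _ _ _ _ => Iff.rfl
  | natom _ | ndep _ _ => exact hφ.elim
  | and _ _ ih₁ ih₂ => exact ⟨ih₁ hφ.1 h.1, ih₂ hφ.2 h.2⟩
  | or _ _ ih₁ ih₂ =>
    obtain ⟨T₁, T₂, hT, h₁, h₂⟩ := h
    exact ⟨T₁, T₂, hT, ih₁ hφ.1 h₁, ih₂ hφ.2 h₂⟩
  | cor _ _ ih₁ ih₂ => exact h.imp (ih₁ hφ.1) (ih₂ hφ.2)
  | box _ ih => exact ih hφ h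
  | dia _ ih =>
    obtain ⟨T', h', hT'⟩ := h
    exact ⟨T', ih hφ h', hT'⟩

/-- full-labeling lemma for negation-free formulas. -/
theorem full_labeling {AP : Type} (φ : MDL AP) (hφ : negFree φ)
    (W : Frame AP) (T : Set W.S) (h : sat W φ T) :
    sat ({ S := W.S, R := W.R, pi := fun _ => (Set.univ : Set AP) } : Frame AP) φ T :=
  sat_fullLabeling hφ h
end

section
/- Claim 1 of Theorem 5 (poor man's modal logic): let r, s ≥ 0 and let φ₁,…,φ_r, ψ₁,…,ψ_s be MDL formulas built from literals and the constants ⊤, ⊥ using only ∧, □, ◇ (no ∨, no ⊘, no dependence atoms). Then the formula ◇φ₁ ∧ … ∧ ◇φ_r ∧ □ψ₁ ∧ … ∧ □ψ_s is unsatisfiable if and only if there exists i ∈ {1,…,r} such that φ_i ∧ ψ₁ ∧ … ∧ ψ_s is unsatisfiable. (In particular, for r = 0 the formula is always satisfiable.) -/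
/-- Poor man's formulas: built from literals and ⊤, ⊥ using only ∧, □, ◇. -/
def poorMan {AP : Type} : MDL AP → Prop
  | .top => True
  | .bot => True
  | .atom _ => True
  | .natom _ => True
  | .and φ ψ => poorMan φ ∧ poorMan ψ
  | .box φ => poorMan φ
  | .dia φ => poorMan φ
  | _ => False

/-- Conjunction of a list of formulas (empty conjunction is ⊤). -/
def bigAnd {AP : Type} : List (MDL AP) → MDL AP
  | [] => .top
  | φ :: l => .and φ (bigAnd l)

/-! The satisfiable direction is a tree construction: glue the models of the `φᵢ ∧ ψ₁ ∧ … ∧ ψₛ`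
below a fresh root. The root satisfies every `◇φᵢ` through its `i`-th subtree, and `□ψⱼ` because
poor man's formulas are closed under arbitrary unions of teams. Conversely, a team satisfying
`◇φᵢ ∧ □ψ₁ ∧ … ∧ □ψₛ` has a nonempty subteam of its successor team satisfying `φᵢ`, and the
`ψⱼ` hold there by downward closure. -/

section

variable {AP : Type}

lemma sat_bigAnd (W : Frame AP) (l : List (MDL AP)) (T : Set W.S) :
    sat W (bigAnd l) T ↔ ∀ χ ∈ l, sat W χ T := by
  induction l with
  | nil => simp [bigAnd, sat]
  | cons a l ih => simp [bigAnd, sat, ih]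

namespace Frame

def succs (W : Frame AP) (T : Set W.S) : Set W.S := {s' | ∃ s ∈ T, W.R s s'}

lemma succs_iUnion (W : Frame AP) {ι : Sort*} (T : ι → Set W.S) :
    W.succs (⋃ i, T i) = ⋃ i, W.succs (T i) := by
  ext; simp only [succs, Set.mem_iUnion, Set.mem_ofPred_eq]; grind

end Frame

lemma sat_box {W : Frame AP} {φ : MDL AP} {T : Set W.S} :
    sat W (.box φ) T ↔ sat W φ (W.succs T) := Iff.rfl

lemma sat_antitone (W : Frame AP) (φ : MDL AP) : Antitone (sat W φ) := by
  intro T' T hsub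
  induction φ generalizing T' T with
  | top => exact id
  | atom | natom => exact fun h s hs ↦ h s (hsub hs)
  | dep => exact fun h s₁ h₁ s₂ h₂ ↦ h s₁ (hsub h₁) s₂ (hsub h₂)
  | bot | ndep => exact fun h ↦ Set.subset_empty_iff.mp (h ▸ hsub)
  | and φ ψ ihφ ihψ => exact fun h ↦ ⟨ihφ hsub h.1, ihψ hsub h.2⟩
  | or φ ψ ihφ ihψ =>
    rintro ⟨T₁, T₂, rfl, h₁, h₂⟩
    refine ⟨T₁ ∩ T', T₂ ∩ T', ?_, ihφ Set.inter_subset_left h₁, ihψ Set.inter_subset_left h₂⟩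
    rw [← Set.union_inter_distrib_right, Set.inter_eq_right.mpr hsub]
  | cor φ ψ ihφ ihψ => exact Or.imp (ihφ hsub) (ihψ hsub)
  | box φ ih => exact ih fun _ ⟨s, hs, hR⟩ ↦ ⟨s, hsub hs, hR⟩
  | dia φ ih => exact fun ⟨U, hU, hT⟩ ↦ ⟨U, hU, fun s hs ↦ hT s (hsub hs)⟩

lemma sat_iUnion_of_poorMan (W : Frame AP) {φ : MDL AP} (hφ : poorMan φ) {ι : Sort*}
    (T : ι → Set W.S) (hT : ∀ i, sat W φ (T i)) : sat W φ (⋃ i, T i) := by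
  induction φ generalizing ι with
  | top => trivial
  | bot => exact Set.iUnion_eq_empty.mpr hT
  | atom | natom =>
    intro s hs
    obtain ⟨i, hs⟩ := Set.mem_iUnion.mp hs
    exact hT i s hs
  | and φ ψ ihφ ihψ => exact ⟨ihφ hφ.1 T fun i ↦ (hT i).1, ihψ hφ.2 T fun i ↦ (hT i).2⟩
  | box φ ih => rw [sat_box, Frame.succs_iUnion]; exact ih hφ _ hT
  | dia φ ih =>
    choose U hU hTU using hT
    refine ⟨⋃ i, U i, ih hφ U hU, fun s hs ↦ ?_⟩
    obtain ⟨i, hs⟩ := Set.mem_iUnion.mp hs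
    obtain ⟨s', hs', hR⟩ := hTU i s hs
    exact ⟨s', Set.mem_iUnion.mpr ⟨i, hs'⟩, hR⟩
  | dep | ndep | or | cor => exact hφ.elim

structure BoundedMorphism (W W' : Frame AP) where
  toFun : W.S → W'.S
  pi_eq : ∀ s, W'.pi (toFun s) = W.pi s
  forth : ∀ s t, W.R s t → W'.R (toFun s) (toFun t)
  back : ∀ s t', W'.R (toFun s) t' → ∃ t, W.R s t ∧ toFun t = t'

namespace BoundedMorphism

variable {W W' : Frame AP}

instance : CoeFun (BoundedMorphism W W') fun _ ↦ W.S → W'.S := ⟨toFun⟩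

lemma succs_image (f : BoundedMorphism W W') (T : Set W.S) :
    W'.succs (f '' T) = f '' W.succs T := by
  ext x
  constructor
  · rintro ⟨_, ⟨s, hs, rfl⟩, hR⟩
    obtain ⟨t, hst, rfl⟩ := f.back s x hR
    exact ⟨t, ⟨s, hs, hst⟩, rfl⟩
  · rintro ⟨t, ⟨s, hs, hst⟩, rfl⟩
    exact ⟨f s, ⟨s, hs, rfl⟩, f.forth s t hst⟩

lemma sat_image (f : BoundedMorphism W W') {φ : MDL AP} {T : Set W.S} (h : sat W φ T) :
    sat W' φ (f '' T) := by
  induction φ generalizing T with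
  | top => trivial
  | bot | ndep => exact Set.image_eq_empty.mpr h
  | atom | natom => rintro _ ⟨s, hs, rfl⟩; exact (f.pi_eq s).symm ▸ h s hs
  | dep =>
    rintro _ ⟨s₁, h₁, rfl⟩ _ ⟨s₂, h₂, rfl⟩
    simpa only [f.pi_eq] using h s₁ h₁ s₂ h₂
  | and φ ψ ihφ ihψ => exact ⟨ihφ h.1, ihψ h.2⟩
  | or φ ψ ihφ ihψ =>
    obtain ⟨T₁, T₂, rfl, h₁, h₂⟩ := h
    exact ⟨f '' T₁, f '' T₂, Set.image_union f T₁ T₂, ihφ h₁, ihψ h₂⟩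
  | cor φ ψ ihφ ihψ => exact h.imp ihφ ihψ
  | box φ ih => rw [sat_box, succs_image]; exact ih h
  | dia φ ih =>
    obtain ⟨U, hU, hTU⟩ := h
    refine ⟨f '' U, ih hU, ?_⟩
    rintro _ ⟨s, hs, rfl⟩
    obtain ⟨s', hs', hR⟩ := hTU s hs
    exact ⟨f s', ⟨s', hs', rfl⟩, f.forth s s' hR⟩

end BoundedMorphism

namespace Frame

variable {ι : Type} (Ws : ι → Frame AP) (Ts : ∀ i, Set (Ws i).S)

inductive RootedSumRel : Option (Σ i, (Ws i).S) → Option (Σ i, (Ws i).S) → Prop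
  | root {i : ι} {t : (Ws i).S} : t ∈ Ts i → RootedSumRel none (some ⟨i, t⟩)
  | step {i : ι} {s t : (Ws i).S} : (Ws i).R s t → RootedSumRel (some ⟨i, s⟩) (some ⟨i, t⟩)

def rootedSum : Frame AP where
  S := Option (Σ i, (Ws i).S)
  R := RootedSumRel Ws Ts
  pi := fun x ↦ x.elim ∅ fun s ↦ (Ws s.1).pi s.2

def rootedSum.incl (i : ι) : BoundedMorphism (Ws i) (rootedSum Ws Ts) where
  toFun s := some ⟨i, s⟩
  pi_eq _ := rfl
  forth _ _ := .step
  back := by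
    rintro s t' (_ | ⟨hst⟩)
    exact ⟨_, hst, rfl⟩

lemma rootedSum_succs_root :
    (rootedSum Ws Ts).succs {none} = ⋃ i, rootedSum.incl Ws Ts i '' Ts i := by
  ext x
  constructor
  · rintro ⟨_, rfl, ⟨ht⟩⟩
    exact Set.mem_iUnion.mpr ⟨_, _, ht, rfl⟩
  · intro hx
    obtain ⟨i, t, ht, rfl⟩ := Set.mem_iUnion.mp hx
    exact ⟨none, rfl, .root ht⟩

end Frame

lemma satisfiable_cons_of_sat_dia {W : Frame AP} {T : Set W.S} (hT : T.Nonempty)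
    {φ : MDL AP} {ψs : List (MDL AP)} (hφ : sat W (.dia φ) T)
    (hψ : ∀ ψ ∈ ψs, sat W (.box ψ) T) : satisfiable (bigAnd (φ :: ψs)) := by
  obtain ⟨U, hU, hTU⟩ := hφ
  refine ⟨W, U ∩ W.succs T, ?_, (sat_bigAnd _ _ _).mpr ?_⟩
  · obtain ⟨s, hs⟩ := hT
    obtain ⟨s', hs', hR⟩ := hTU s hs
    exact ⟨s', hs', s, hs, hR⟩
  · exact List.forall_mem_cons.mpr ⟨sat_antitone W φ Set.inter_subset_left hU,
      fun ψ hψ' ↦ sat_antitone W ψ Set.inter_subset_right (hψ ψ hψ')⟩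

lemma exists_sat_dia_box_of_satisfiable_cons {ι : Type} (φ : ι → MDL AP) {ψs : List (MDL AP)}
    (hψ : ∀ ψ ∈ ψs, poorMan ψ) (h : ∀ i, satisfiable (bigAnd (φ i :: ψs))) :
    ∃ (W : Frame AP) (T : Set W.S), T.Nonempty ∧ (∀ i, sat W (.dia (φ i)) T) ∧
      ∀ ψ ∈ ψs, sat W (.box ψ) T := by
  choose Ws Ts hne hsat using h
  simp only [sat_bigAnd, List.forall_mem_cons] at hsat
  refine ⟨Frame.rootedSum Ws Ts, {none}, Set.singleton_nonempty _, fun i ↦ ?_, fun ψ hψ' ↦ ?_⟩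
  · obtain ⟨t, ht⟩ := hne i
    refine ⟨_, (Frame.rootedSum.incl Ws Ts i).sat_image (hsat i).1, ?_⟩
    rintro _ rfl
    exact ⟨_, ⟨t, ht, rfl⟩, .root ht⟩
  · rw [sat_box, Frame.rootedSum_succs_root]
    exact sat_iUnion_of_poorMan _ (hψ ψ hψ') _
      fun i ↦ (Frame.rootedSum.incl Ws Ts i).sat_image ((hsat i).2 ψ hψ')

theorem satisfiable_bigAnd_dia_box_iff (φs ψs : List (MDL AP)) (hψ : ∀ ψ ∈ ψs, poorMan ψ) :
    satisfiable (bigAnd (φs.map MDL.dia ++ ψs.map MDL.box)) ↔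
      ∀ φ ∈ φs, satisfiable (bigAnd (φ :: ψs)) := by
  have hsat (W : Frame AP) (T : Set W.S) : sat W (bigAnd (φs.map .dia ++ ψs.map .box)) T ↔
      (∀ φ ∈ φs, sat W (.dia φ) T) ∧ ∀ ψ ∈ ψs, sat W (.box ψ) T := by
    simp only [sat_bigAnd, List.forall_mem_append, List.forall_mem_map]
  constructor
  · rintro ⟨W, T, hT, h⟩ φ hφ
    rw [hsat] at h
    exact satisfiable_cons_of_sat_dia hT (h.1 φ hφ) h.2
  · intro h
    obtain ⟨W, T, hT, hdia, hbox⟩ :=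
      exists_sat_dia_box_of_satisfiable_cons (fun φ : {φ // φ ∈ φs} ↦ φ.1) hψ fun φ ↦ h φ.1 φ.2
    exact ⟨W, T, hT, (hsat W T).mpr ⟨fun φ hφ ↦ hdia ⟨φ, hφ⟩, hbox⟩⟩

end

theorem poorman_claim1_general {AP : Type} (φs ψs : List (MDL AP))
    (hψ : ∀ ψ ∈ ψs, poorMan ψ) :
    ¬ satisfiable (bigAnd (φs.map MDL.dia ++ ψs.map MDL.box)) ↔
      ∃ φ ∈ φs, ¬ satisfiable (bigAnd (φ :: ψs)) := by
  simp only [satisfiable_bigAnd_dia_box_iff φs ψs hψ, not_forall, exists_prop]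

/-- Claim 1 of Theorem 5 (poor man's modal logic). -/
theorem poorman_claim1 {AP : Type} (φs ψs : List (MDL AP))
    (hφ : ∀ φ ∈ φs, poorMan φ) (hψ : ∀ ψ ∈ ψs, poorMan ψ) :
    ¬ satisfiable (bigAnd (φs.map MDL.dia ++ ψs.map MDL.box)) ↔
      ∃ φ ∈ φs, ¬ satisfiable (bigAnd (φ :: ψs)) :=
  poorman_claim1_general φs ψs hψ
end

section
/- ◇-free formulas and intransitive singletons (Theorem 8, case ◇ ∉ M): an MDL formula φ containing no occurrence of the modality ◇ is satisfiable if and only if there is a labeling π₀ ⊆ AP such that the intransitive singleton frame W₀ — the frame with a single world w₀, empty accessibility relation, and π(w₀) = π₀ — satisfies W₀,{w₀} ⊨ φ. -/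
/-- A formula contains no occurrence of ◇. -/
def diaFree {AP : Type} : MDL AP → Prop
  | .dia _ => False
  | .and φ ψ => diaFree φ ∧ diaFree ψ
  | .or φ ψ => diaFree φ ∧ diaFree ψ
  | .cor φ ψ => diaFree φ ∧ diaFree ψ
  | .box φ => diaFree φ
  | _ => True

/-- The intransitive singleton with labeling π₀ : one world, no edges. -/
def intransSingleton (AP : Type) (π₀ : Set AP) : Frame AP :=
  { S := Unit, R := fun _ _ => False, pi := fun _ => π₀ }

/-!
The empty team satisfies every formula, and on the intransitive singleton the successor team of
any team is empty, so every `□`-formula holds there vacuously. The remaining atoms evaluated at a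
single world only see its labeling. Hence, by induction on a `◇`-free formula, any world `s` of a
satisfying team yields the intransitive singleton labelled `π(s)`; a dependence disjunction is
followed into the half of the split that contains `s`.
-/

section

variable {AP : Type}

theorem sat_empty (W : Frame AP) (φ : MDL AP) : sat W φ ∅ := by
  induction φ with
  | top => trivial
  | bot | ndep => rfl
  | atom | natom | dep => simp [sat]
  | and _ _ ih₁ ih₂ => exact ⟨ih₁, ih₂⟩
  | or _ _ ih₁ ih₂ => exact ⟨∅, ∅, (Set.union_empty ∅).symm, ih₁, ih₂⟩
  | cor _ _ ih₁ _ => exact Or.inl ih₁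
  | box _ ih => simpa [sat] using ih
  | dia _ ih => exact ⟨∅, ih, by simp⟩

theorem sat_intransSingleton_box (π₀ : Set AP) (φ : MDL AP)
    (T : Set (intransSingleton AP π₀).S) : sat (intransSingleton AP π₀) (.box φ) T := by
  have hsucc : {s' | ∃ s ∈ T, (intransSingleton AP π₀).R s s'} = ∅ :=
    Set.eq_empty_of_forall_notMem fun _ ⟨_, _, hR⟩ => hR
  change sat _ φ _
  rw [hsucc]
  exact sat_empty _ φ

theorem sat_intransSingleton_of_mem {φ : MDL AP} (hφ : diaFree φ) {W : Frame AP}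
    {T : Set W.S} (h : sat W φ T) {s : W.S} (hs : s ∈ T) :
    sat (intransSingleton AP (W.pi s)) φ {()} := by
  induction φ generalizing T with
  | top => trivial
  | bot | ndep => exact absurd hs (h ▸ Set.notMem_empty s)
  | atom | natom => exact fun _ _ => h s hs
  | dep => exact fun _ _ _ _ _ => Iff.rfl
  | and _ _ ih₁ ih₂ => exact ⟨ih₁ hφ.1 h.1 hs, ih₂ hφ.2 h.2 hs⟩
  | or _ _ ih₁ ih₂ =>
    obtain ⟨T₁, T₂, rfl, h₁, h₂⟩ := h
    rcases hs with hs₁ | hs₂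
    · exact ⟨{()}, ∅, (Set.union_empty _).symm, ih₁ hφ.1 h₁ hs₁, sat_empty _ _⟩
    · exact ⟨∅, {()}, (Set.empty_union _).symm, sat_empty _ _, ih₂ hφ.2 h₂ hs₂⟩
  | cor _ _ ih₁ ih₂ => exact h.imp (ih₁ hφ.1 · hs) (ih₂ hφ.2 · hs)
  | box => exact sat_intransSingleton_box _ _ _
  | dia => exact hφ.elim

end

/-- ◇-free formulas are satisfiable iff satisfied in an
intransitive singleton. -/
theorem diaFree_sat_iff_intransSingleton {AP : Type} (φ : MDL AP) (hφ : diaFree φ) :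
    satisfiable φ ↔
      ∃ π₀ : Set AP,
        sat (intransSingleton AP π₀) φ ({Unit.unit} : Set (intransSingleton AP π₀).S) := by
  constructor
  · rintro ⟨W, T, ⟨s, hs⟩, h⟩
    exact ⟨W.pi s, sat_intransSingleton_of_mem hφ h hs⟩
  · rintro ⟨π₀, h⟩
    exact ⟨intransSingleton AP π₀, {()}, Set.singleton_nonempty _, h⟩
end

section
/- Theorem 8a (eliminating dependence atoms with one modality): let φ be an MDL formula that contains at most one of the two modalities (i.e. φ contains no occurrence of □, or φ contains no occurrence of ◇), and let φ' be the formula obtained from φ by replacing every positive dependence atom dep(p₁,…,p_{n−1};p_n) with ⊤ and every negated dependence atom ¬dep(p₁,…,p_{n−1};p_n) with ⊥. Then φ is satisfiable if and only if φ' is satisfiable. -/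
/-- A formula contains no occurrence of □. -/
def boxFree {AP : Type} : MDL AP → Prop
  | .box _ => False
  | .and φ ψ => boxFree φ ∧ boxFree ψ
  | .or φ ψ => boxFree φ ∧ boxFree ψ
  | .cor φ ψ => boxFree φ ∧ boxFree ψ
  | .dia φ => boxFree φ
  | _ => True

/-- Replace every dependence atom by ⊤ and every negated dependence atom by ⊥. -/
def elimDep {AP : Type} : MDL AP → MDL AP
  | .dep _ _ => .top
  | .ndep _ _ => .bot
  | .and φ ψ => .and (elimDep φ) (elimDep ψ)
  | .or φ ψ => .or (elimDep φ) (elimDep ψ)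
  | .cor φ ψ => .cor (elimDep φ) (elimDep ψ)
  | .box φ => .box (elimDep φ)
  | .dia φ => .dia (elimDep φ)
  | φ => φ

/-!
On a team with at most one world every dependence atom holds, so `φ` and `elimDep φ` agree
there as long as the modalities keep teams subsingleton. A ◇ can always be answered by a single
successor (MDL is downward closed), while a □ keeps teams subsingleton only on frames where each
world has at most one successor. Hence a box-free `elimDep φ`, satisfied at a single world, already
satisfies `φ`; a diamond-free `elimDep φ` stays true after pruning the frame to one chosen successor
per world, and on the pruned frame it again yields `φ`.
-/

section

variable {AP : Type}

def Frame.IsFunctional (W : Frame AP) : Prop :=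
  ∀ ⦃a b c : W.S⦄, W.R a b → W.R a c → b = c

noncomputable def Frame.prune (W : Frame AP) : Frame AP :=
  ⟨W.S, fun a b => ∃ h : ∃ c, W.R a c, b = h.choose, W.pi⟩

theorem Frame.prune_R_le (W : Frame AP) ⦃a b : W.S⦄ (h : W.prune.R a b) : W.R a b := by
  obtain ⟨hex, rfl⟩ := h
  exact hex.choose_spec

theorem Frame.isFunctional_prune (W : Frame AP) : W.prune.IsFunctional := by
  rintro a b c ⟨_, rfl⟩ ⟨_, rfl⟩
  rfl

theorem diaFree_elimDep {φ : MDL AP} (hφ : diaFree φ) : diaFree (elimDep φ) := by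
  induction φ with
  | and _ _ ih₁ ih₂ | or _ _ ih₁ ih₂ | cor _ _ ih₁ ih₂ => exact ⟨ih₁ hφ.1, ih₂ hφ.2⟩
  | box _ ih => exact ih hφ
  | dia => exact hφ.elim
  | _ => trivial

theorem sat_of_subset (W : Frame AP) (φ : MDL AP) {T T' : Set W.S} (hT : T' ⊆ T)
    (h : sat W φ T) : sat W φ T' := by
  induction φ generalizing T T' with
  | top => trivial
  | bot | ndep => exact Set.subset_empty_iff.mp (h ▸ hT)
  | atom | natom => exact fun s hs => h s (hT hs)
  | dep => exact fun s₁ h₁ s₂ h₂ => h s₁ (hT h₁) s₂ (hT h₂)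
  | and _ _ ih₁ ih₂ => exact ⟨ih₁ hT h.1, ih₂ hT h.2⟩
  | or _ _ ih₁ ih₂ =>
      obtain ⟨T₁, T₂, rfl, h₁, h₂⟩ := h
      refine ⟨T' ∩ T₁, T' ∩ T₂, ?_, ih₁ Set.inter_subset_right h₁,
        ih₂ Set.inter_subset_right h₂⟩
      rw [← Set.inter_union_distrib_left, Set.inter_eq_left.mpr hT]
  | cor _ _ ih₁ ih₂ => exact h.imp (ih₁ hT) (ih₂ hT)
  | box _ ih =>
      refine ih ?_ h
      rintro x ⟨s, hs, hr⟩
      exact ⟨s, hT hs, hr⟩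
  | dia =>
      obtain ⟨U, hU, hsucc⟩ := h
      exact ⟨U, hU, fun s hs => hsucc s (hT hs)⟩

theorem sat_elimDep_of_sat (W : Frame AP) (φ : MDL AP) {T : Set W.S} (h : sat W φ T) :
    sat W (elimDep φ) T := by
  induction φ generalizing T with
  | dep => trivial
  | and _ _ ih₁ ih₂ => exact ⟨ih₁ h.1, ih₂ h.2⟩
  | or _ _ ih₁ ih₂ =>
      obtain ⟨T₁, T₂, hT, h₁, h₂⟩ := h
      exact ⟨T₁, T₂, hT, ih₁ h₁, ih₂ h₂⟩
  | cor _ _ ih₁ ih₂ => exact h.imp ih₁ ih₂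
  | box _ ih => exact ih h
  | dia _ ih =>
      obtain ⟨U, hU, hsucc⟩ := h
      exact ⟨U, ih hU, hsucc⟩
  | _ => exact h

theorem sat_of_le_R_of_diaFree (W : Frame AP) {R' : W.S → W.S → Prop}
    (hR : ∀ ⦃a b⦄, R' a b → W.R a b) (ψ : MDL AP) (hψ : diaFree ψ) {T : Set W.S}
    (h : sat W ψ T) : sat ⟨W.S, R', W.pi⟩ ψ T := by
  induction ψ generalizing T with
  | and _ _ ih₁ ih₂ => exact ⟨ih₁ hψ.1 h.1, ih₂ hψ.2 h.2⟩
  | or _ _ ih₁ ih₂ =>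
      obtain ⟨T₁, T₂, hT, h₁, h₂⟩ := h
      exact ⟨T₁, T₂, hT, ih₁ hψ.1 h₁, ih₂ hψ.2 h₂⟩
  | cor _ _ ih₁ ih₂ => exact h.imp (ih₁ hψ.1) (ih₂ hψ.2)
  | box _ ih =>
      refine ih hψ (sat_of_subset W _ ?_ h)
      rintro x ⟨s, hs, hr⟩
      exact ⟨s, hs, hR hr⟩
  | dia => exact hψ.elim
  | _ => exact h

theorem sat_of_sat_elimDep_of_subsingleton (W : Frame AP) (φ : MDL AP)
    (hW : boxFree φ ∨ W.IsFunctional) {T : Set W.S} (hT : T.Subsingleton)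
    (h : sat W (elimDep φ) T) : sat W φ T := by
  induction φ generalizing T with
  | dep => exact fun s₁ h₁ s₂ h₂ _ => by rw [hT h₁ h₂]
  | and _ _ ih₁ ih₂ =>
      exact ⟨ih₁ (hW.imp_left (·.1)) hT h.1, ih₂ (hW.imp_left (·.2)) hT h.2⟩
  | or _ _ ih₁ ih₂ =>
      obtain ⟨T₁, T₂, hT₁₂, h₁, h₂⟩ := h
      exact ⟨T₁, T₂, hT₁₂, ih₁ (hW.imp_left (·.1)) (hT.anti (hT₁₂ ▸ Set.subset_union_left)) h₁,
        ih₂ (hW.imp_left (·.2)) (hT.anti (hT₁₂ ▸ Set.subset_union_right)) h₂⟩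
  | cor _ _ ih₁ ih₂ => exact h.imp (ih₁ (hW.imp_left (·.1)) hT) (ih₂ (hW.imp_left (·.2)) hT)
  | box _ ih =>
      have hfun : W.IsFunctional := hW.resolve_left id
      refine ih (Or.inr hfun) ?_ h
      rintro b ⟨s₁, h₁, r₁⟩ c ⟨s₂, h₂, r₂⟩
      exact hfun r₁ (hT h₂ h₁ ▸ r₂)
  | dia _ ih =>
      obtain ⟨U, hU, hsucc⟩ := h
      rcases T.eq_empty_or_nonempty with rfl | ⟨s, hs⟩
      · exact ⟨∅, ih hW Set.subsingleton_empty (sat_of_subset W _ (Set.empty_subset U) hU),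
          by simp⟩
      · obtain ⟨s', hs', hr⟩ := hsucc s hs
        refine ⟨{s'}, ih hW Set.subsingleton_singleton
          (sat_of_subset W _ (Set.singleton_subset_iff.mpr hs') hU), ?_⟩
        exact fun t ht => ⟨s', rfl, hT hs ht ▸ hr⟩
  | _ => exact h

end

/-- Theorem 8a, eliminating dependence atoms with one modality. -/
theorem one_modality_elimDep {AP : Type} (φ : MDL AP)
    (hφ : boxFree φ ∨ diaFree φ) :
    satisfiable φ ↔ satisfiable (elimDep φ) := by
  refine ⟨fun ⟨W, T, hT, h⟩ => ⟨W, T, hT, sat_elimDep_of_sat W φ h⟩, ?_⟩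
  rintro ⟨W, T, ⟨s, hs⟩, h⟩
  have hsingle : sat W (elimDep φ) {s} :=
    sat_of_subset W _ (Set.singleton_subset_iff.mpr hs) h
  rcases hφ with hbox | hdia
  · exact ⟨W, {s}, Set.singleton_nonempty s, sat_of_sat_elimDep_of_subsingleton W φ
      (Or.inl hbox) Set.subsingleton_singleton hsingle⟩
  · have hpruned : sat W.prune (elimDep φ) {s} :=
      sat_of_le_R_of_diaFree W W.prune_R_le _ (diaFree_elimDep hdia) hsingle
    exact ⟨W.prune, {s}, Set.singleton_nonempty s, sat_of_sat_elimDep_of_subsingleton W.prune φ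
      (Or.inr W.isFunctional_prune) Set.subsingleton_singleton hpruned⟩
end

section
/- Singleton translation into ordinary modal logic (used in Theorem 10a, after Sevenster): for every MDL formula φ that contains no classical disjunction ⊘, there exists an MDL formula ψ containing neither dependence atoms (positive or negated) nor ⊘ — i.e. an ordinary modal logic formula over ⊤, ⊥, literals, ∧, ∨, □, ◇ — such that for every frame W and every world w of W: W,{w} ⊨ φ if and only if W,{w} ⊨ ψ. -/
/-- Ordinary modal logic formulas: no dependence atoms (positive or negated)
and no classical disjunction ⊘. -/
def isML {AP : Type} : MDL AP → Prop
  | .dep _ _ => False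
  | .ndep _ _ => False
  | .cor _ _ => False
  | .and φ ψ => isML φ ∧ isML ψ
  | .or φ ψ => isML φ ∧ isML ψ
  | .box φ => isML φ
  | .dia φ => isML φ
  | _ => True

/-!
Every MDL formula is equivalent, on all teams, to a classical disjunction `ψ₁ ⊘ ⋯ ⊘ ψₖ` of
ordinary modal formulas. This is immediate for literals and commutes with `∧`, `∨`, `□`, `◇`
and `⊘` by exchanging quantifiers. A dependence atom unfolds along its list of arguments:
`dep(;q) ≡ q ⊘ ¬q`, and `dep(p,p̄;q) ≡ (¬p ∨ dep(p̄;q)) ∧ (p ∨ dep(p̄;q))`, since `¬p ∨ χ`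
says that the `p`-part of the team satisfies the downward closed `χ`.
On a singleton team `⊘` agrees with `∨`, because every formula is satisfied by the empty
team, so `ψ₁ ∨ ⋯ ∨ ψₖ ∨ ⊥` is the required translation.
-/

variable {AP : Type}

theorem sat_or_singleton_iff (W : Frame AP) (φ ψ : MDL AP) (w : W.S) :
    sat W (.or φ ψ) {w} ↔ sat W φ {w} ∨ sat W ψ {w} := by
  constructor
  · rintro ⟨T₁, T₂, hT, hφ, hψ⟩
    have hw : w ∈ T₁ ∪ T₂ := hT ▸ rfl
    rcases hw with hw | hw
    · left
      rwa [← Set.Subset.antisymm (hT ▸ Set.subset_union_left) (Set.singleton_subset_iff.2 hw)]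
    · right
      rwa [← Set.Subset.antisymm (hT ▸ Set.subset_union_right) (Set.singleton_subset_iff.2 hw)]
  · rintro (hφ | hψ)
    · exact ⟨{w}, ∅, (Set.union_empty _).symm, hφ, sat_empty W ψ⟩
    · exact ⟨∅, {w}, (Set.empty_union _).symm, sat_empty W φ, hψ⟩

theorem sat_foldr_or_bot_singleton_iff (W : Frame AP) (L : List (MDL AP)) (w : W.S) :
    sat W (L.foldr .or .bot) {w} ↔ ∃ ψ ∈ L, sat W ψ {w} := by
  induction L with
  | nil => simp [sat]
  | cons φ L ih => simp [sat_or_singleton_iff, ih]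

theorem isML_foldr_or_bot {L : List (MDL AP)} (hL : ∀ ψ ∈ L, isML ψ) :
    isML (L.foldr .or .bot) := by
  induction L with
  | nil => trivial
  | cons φ L ih => exact ⟨hL φ (by simp), ih fun ψ hψ => hL ψ (by simp [hψ])⟩

theorem sat_dep_of_subset {W : Frame AP} {ps : List AP} {q : AP} {S T : Set W.S}
    (hST : S ⊆ T) (hT : sat W (.dep ps q) T) : sat W (.dep ps q) S :=
  fun s₁ hs₁ s₂ hs₂ => hT s₁ (hST hs₁) s₂ (hST hs₂)

theorem sat_dep_nil_iff (W : Frame AP) (q : AP) (T : Set W.S) :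
    sat W (.dep [] q) T ↔ sat W (.cor (.atom q) (.natom q)) T := by
  simp only [sat, List.not_mem_nil, IsEmpty.forall_iff, implies_true, forall_const]
  by_cases h : ∃ s ∈ T, q ∈ W.pi s
  · obtain ⟨s, hs, hq⟩ := h
    exact ⟨fun hT => .inl fun t ht => (hT s hs t ht).1 hq,
      by rintro (hT | hT) <;> grind⟩
  · push Not at h
    exact ⟨fun _ => .inr h, by rintro (hT | hT) <;> grind⟩

theorem sat_or_dep_iff_of_flat {W : Frame AP} {ℓ : MDL AP} {P : W.S → Prop}
    (hℓ : ∀ T, sat W ℓ T ↔ ∀ s ∈ T, P s) (ps : List AP) (q : AP) (T : Set W.S) :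
    sat W (.or ℓ (.dep ps q)) T ↔ sat W (.dep ps q) {s ∈ T | ¬ P s} := by
  constructor
  · rintro ⟨T₁, T₂, rfl, h₁, h₂⟩
    refine sat_dep_of_subset (fun s ⟨hs, hP⟩ => ?_) h₂
    exact hs.resolve_left fun hs₁ => hP ((hℓ T₁).1 h₁ s hs₁)
  · intro h
    refine ⟨{s ∈ T | P s}, {s ∈ T | ¬ P s}, by rw [← Set.sep_or]; simp [em], ?_, h⟩
    exact (hℓ _).2 fun s hs => hs.2

theorem sat_dep_cons_iff (W : Frame AP) (p : AP) (ps : List AP) (q : AP) (T : Set W.S) :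
    sat W (.dep (p :: ps) q) T ↔
      sat W (.and (.or (.natom p) (.dep ps q)) (.or (.atom p) (.dep ps q))) T := by
  change _ ↔ sat W (.or _ _) T ∧ sat W (.or _ _) T
  rw [sat_or_dep_iff_of_flat (fun _ => Iff.rfl), sat_or_dep_iff_of_flat (fun _ => Iff.rfl)]
  simp only [sat, List.mem_cons, forall_eq_or_imp, Set.mem_ofPred_eq, not_not]
  constructor
  · exact fun h => ⟨fun s₁ hs₁ s₂ hs₂ hps => h s₁ hs₁.1 s₂ hs₂.1 ⟨by grind, hps⟩,
      fun s₁ hs₁ s₂ hs₂ hps => h s₁ hs₁.1 s₂ hs₂.1 ⟨by grind, hps⟩⟩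
  · rintro ⟨hp, hnp⟩ s₁ hs₁ s₂ hs₂ ⟨hp₁₂, hps⟩
    by_cases h : p ∈ W.pi s₁
    · exact hp s₁ ⟨hs₁, h⟩ s₂ ⟨hs₂, hp₁₂.1 h⟩ hps
    · exact hnp s₁ ⟨hs₁, h⟩ s₂ ⟨hs₂, mt hp₁₂.2 h⟩ hps

def HasMLNormalForm (φ : MDL AP) : Prop :=
  ∃ L : List (MDL AP), (∀ ψ ∈ L, isML ψ) ∧
    ∀ (W : Frame AP) (T : Set W.S), sat W φ T ↔ ∃ ψ ∈ L, sat W ψ T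

namespace HasMLNormalForm

theorem of_isML {φ : MDL AP} (h : isML φ) : HasMLNormalForm φ :=
  ⟨[φ], by simpa using h, by simp⟩

theorem of_sat_iff {φ φ' : MDL AP} (h : ∀ (W : Frame AP) (T : Set W.S), sat W φ T ↔ sat W φ' T)
    (h' : HasMLNormalForm φ') : HasMLNormalForm φ := by
  obtain ⟨L, hL, hsat⟩ := h'
  exact ⟨L, hL, fun W T => (h W T).trans (hsat W T)⟩

theorem and {φ φ' : MDL AP} : HasMLNormalForm φ → HasMLNormalForm φ' →
    HasMLNormalForm (.and φ φ')
  | ⟨L, hL, hsat⟩, ⟨L', hL', hsat'⟩ => by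
    refine ⟨(L ×ˢ L').map fun ψ => .and ψ.1 ψ.2, ?_, fun W T => ?_⟩
    · simp only [List.mem_map, List.mem_product, Prod.exists]
      rintro _ ⟨ψ, ψ', ⟨hψ, hψ'⟩, rfl⟩
      exact ⟨hL ψ hψ, hL' ψ' hψ'⟩
    · simp only [sat, hsat, hsat', List.mem_map, Prod.exists, List.mem_product, ↓existsAndEq,
        and_true]
      constructor
      · rintro ⟨⟨ψ, hψ, h⟩, ⟨ψ', hψ', h'⟩⟩
        exact ⟨ψ, ψ', ⟨hψ, hψ'⟩, h, h'⟩
      · rintro ⟨ψ, ψ', ⟨hψ, hψ'⟩, h, h'⟩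
        exact ⟨⟨ψ, hψ, h⟩, ⟨ψ', hψ', h'⟩⟩

theorem or {φ φ' : MDL AP} : HasMLNormalForm φ → HasMLNormalForm φ' →
    HasMLNormalForm (.or φ φ')
  | ⟨L, hL, hsat⟩, ⟨L', hL', hsat'⟩ => by
    refine ⟨(L ×ˢ L').map fun ψ => .or ψ.1 ψ.2, ?_, fun W T => ?_⟩
    · simp only [List.mem_map, List.mem_product, Prod.exists]
      rintro _ ⟨ψ, ψ', ⟨hψ, hψ'⟩, rfl⟩
      exact ⟨hL ψ hψ, hL' ψ' hψ'⟩
    · simp only [sat, hsat, hsat', List.mem_map, Prod.exists, List.mem_product, ↓existsAndEq,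
        and_true]
      constructor
      · rintro ⟨T₁, T₂, rfl, ⟨ψ, hψ, h⟩, ⟨ψ', hψ', h'⟩⟩
        exact ⟨ψ, ψ', ⟨hψ, hψ'⟩, T₁, T₂, rfl, h, h'⟩
      · rintro ⟨ψ, ψ', ⟨hψ, hψ'⟩, T₁, T₂, rfl, h, h'⟩
        exact ⟨T₁, T₂, rfl, ⟨ψ, hψ, h⟩, ⟨ψ', hψ', h'⟩⟩

theorem cor {φ φ' : MDL AP} : HasMLNormalForm φ → HasMLNormalForm φ' →
    HasMLNormalForm (.cor φ φ')
  | ⟨L, hL, hsat⟩, ⟨L', hL', hsat'⟩ =>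
    ⟨L ++ L', by simpa [or_imp, forall_and] using ⟨hL, hL'⟩,
      fun W T => by simp only [sat, hsat, hsat', List.mem_append, or_and_right, exists_or]⟩

theorem box {φ : MDL AP} : HasMLNormalForm φ → HasMLNormalForm (.box φ)
  | ⟨L, hL, hsat⟩ => ⟨L.map .box, by simpa [isML] using hL, fun W T => by simp [sat, hsat]⟩

theorem dia {φ : MDL AP} : HasMLNormalForm φ → HasMLNormalForm (.dia φ)
  | ⟨L, hL, hsat⟩ => by
    refine ⟨L.map .dia, by simpa [isML] using hL, fun W T => ⟨?_, ?_⟩⟩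
    · rintro ⟨T', hT', hR⟩
      obtain ⟨ψ, hψ, h⟩ := (hsat W T').1 hT'
      exact ⟨.dia ψ, List.mem_map_of_mem hψ, T', h, hR⟩
    · rintro ⟨_, hmem, hdia⟩
      obtain ⟨ψ, hψ, rfl⟩ := List.mem_map.1 hmem
      obtain ⟨T', h, hR⟩ := hdia
      exact ⟨T', (hsat W T').2 ⟨ψ, hψ, h⟩, hR⟩

end HasMLNormalForm

theorem hasMLNormalForm_dep (ps : List AP) (q : AP) : HasMLNormalForm (.dep ps q) := by
  induction ps with
  | nil =>
    exact .of_sat_iff (sat_dep_nil_iff · q) (.cor (.of_isML trivial) (.of_isML trivial))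
  | cons p ps ih =>
    exact .of_sat_iff (sat_dep_cons_iff · p ps q)
      (.and (.or (.of_isML trivial) ih) (.or (.of_isML trivial) ih))

theorem hasMLNormalForm (φ : MDL AP) : HasMLNormalForm φ := by
  induction φ with
  | dep ps q => exact hasMLNormalForm_dep ps q
  | ndep => exact .of_sat_iff (fun _ _ => Iff.rfl) (.of_isML (φ := .bot) trivial)
  | and _ _ ihφ ihψ => exact ihφ.and ihψ
  | or _ _ ihφ ihψ => exact ihφ.or ihψ
  | cor _ _ ihφ ihψ => exact ihφ.cor ihψ
  | box _ ih => exact ih.box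
  | dia _ ih => exact ih.dia
  | _ => exact .of_isML trivial

theorem singleton_translation_general {AP : Type} (φ : MDL AP) :
    ∃ ψ : MDL AP, isML ψ ∧
      ∀ (W : Frame AP) (w : W.S),
        sat W φ ({w} : Set W.S) ↔ sat W ψ ({w} : Set W.S) := by
  obtain ⟨L, hL, hsat⟩ := hasMLNormalForm φ
  exact ⟨L.foldr .or .bot, isML_foldr_or_bot hL, fun W w =>
    (hsat W {w}).trans (sat_foldr_or_bot_singleton_iff W L w).symm⟩

/-- singleton translation into ordinary modal logic. -/
theorem singleton_translation {AP : Type} (φ : MDL AP) (hφ : corFree φ) :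
    ∃ ψ : MDL AP, isML ψ ∧
      ∀ (W : Frame AP) (w : W.S),
        sat W φ ({w} : Set W.S) ↔ sat W ψ ({w} : Set W.S) :=
  singleton_translation_general φ
end
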